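/- arXiv:1408.5060 — 3 statements merged into one kernel-verified Lean document; each statement's English description precedes it below -/
import Mathlib

section
/- Let λ > 0 and β, γ > 0. Then S(q_A(t^β), q_B(t^γ)) = t^{−max(β,γ)} θ(t) for t ≥ 1, where θ is slowly varying at infinity. Furthermore θ(t) → χ_λ as t → ∞ if β = γ, and θ(t) → 1 otherwise. -/
open MeasureTheory Filter Set

noncomputable section

/-- A positive function defined near `+∞` is slowly varying at infinity if
`L(at)/L(t) → 1` as `t → ∞` for every `a > 0`. -/
def SlowlyVarying (L : ℝ → ℝ) : Prop :=
  (∀ᶠ t in atTop, 0 < L t) ∧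
    ∀ a : ℝ, 0 < a → Tendsto (fun t => L (a * t) / L t) atTop (nhds 1)

/-- `N` is a norm on `ℝ²`, viewed as a two-argument function. -/
def IsNorm2 (N : ℝ → ℝ → ℝ) : Prop :=
  (∀ x y, 0 ≤ N x y) ∧ (∀ x y, N x y = 0 ↔ x = 0 ∧ y = 0) ∧
    (∀ c x y, N (c * x) (c * y) = |c| * N x y) ∧
    (∀ x₁ y₁ x₂ y₂, N (x₁ + x₂) (y₁ + y₂) ≤ N x₁ y₁ + N x₂ y₂)

/-- Condition (C1): symmetry of the norm. -/
def CondC1 (N : ℝ → ℝ → ℝ) : Prop := ∀ x y, N x y = N y x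

/-- Condition (C2): the norm dominates the sup-norm. -/
def CondC2 (N : ℝ → ℝ → ℝ) : Prop := ∀ x y : ℝ, max |x| |y| ≤ N x y

/-- Condition (C3): equality with the sup-norm off the diagonal. -/
def CondC3 (N : ℝ → ℝ → ℝ) : Prop :=
  ∃ x₀ y₀ : ℝ, 0 ≤ x₀ ∧ 0 ≤ y₀ ∧ x₀ ≠ y₀ ∧ N x₀ y₀ = max x₀ y₀

/-- τ(v) = ‖(v, 1−v)‖_m / v.  (At `v = 0` this real-valued version takes the
junk value `0` instead of `+∞`; this is irrelevant for all integrals below,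
which are taken against an atomless measure.) -/
def tau (N : ℝ → ℝ → ℝ) (v : ℝ) : ℝ := N v (1 - v) / v

/-- The probability measure associated with a distribution function `F_V` on
`[0,1]` that is continuous (no atoms) and strictly increasing (positive mass on
every nonempty open subinterval of `[0,1]`): Assumption 1. -/
def GoodMeasure (μ : Measure ℝ) : Prop :=
  μ ((Set.Icc (0:ℝ) 1)ᶜ) = 0 ∧ (∀ x : ℝ, μ {x} = 0) ∧
    ∀ a b : ℝ, 0 ≤ a → a < b → b ≤ 1 → 0 < μ (Set.Ioo a b)

/-- The GP(1,λ) survivor function `(1 + λx)₊^{−1/λ}`, interpreted as `e^{−x}`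
when `λ = 0`. -/
def gpTail (l x : ℝ) : ℝ :=
  if l = 0 then Real.exp (-x) else (max (1 + l * x) 0) ^ (-1 / l)

/-- Marginal survival function `S_A(x) = ∫₀¹ (1 + λ x τ(v))₊^{−1/λ} dF_V(v)`. -/
def survA (N : ℝ → ℝ → ℝ) (μ : Measure ℝ) (l x : ℝ) : ℝ :=
  ∫ v, gpTail l (x * tau N v) ∂μ

/-- Marginal survival function `S_B(y) = ∫₀¹ (1 + λ y τ(1−v))₊^{−1/λ} dF_V(v)`. -/
def survB (N : ℝ → ℝ → ℝ) (μ : Measure ℝ) (l y : ℝ) : ℝ :=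
  ∫ v, gpTail l (y * tau N (1 - v)) ∂μ

/-- Joint survival function
`S(x,y) = ∫₀¹ (1 + λ max{x τ(v), y τ(1−v)})₊^{−1/λ} dF_V(v)`. -/
def survJ (N : ℝ → ℝ → ℝ) (μ : Measure ℝ) (l x y : ℝ) : ℝ :=
  ∫ v, gpTail l (max (x * tau N v) (y * tau N (1 - v))) ∂μ

/-- `μ₁ = λ^{−1/λ} ∫₀¹ τ(v)^{−1/λ} dF_V(v)` (for `λ > 0`). -/
def mu1 (N : ℝ → ℝ → ℝ) (μ : Measure ℝ) (l : ℝ) : ℝ :=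
  l ^ (-1 / l) * ∫ v, tau N v ^ (-1 / l) ∂μ

/-- `μ₂ = λ^{−1/λ} ∫₀¹ τ(1−v)^{−1/λ} dF_V(v)` (for `λ > 0`). -/
def mu2 (N : ℝ → ℝ → ℝ) (μ : Measure ℝ) (l : ℝ) : ℝ :=
  l ^ (-1 / l) * ∫ v, tau N (1 - v) ^ (-1 / l) ∂μ

/-- `χ_λ = λ^{−1/λ} ∫₀¹ min{τ(v)^{−1/λ}/μ₁, τ(1−v)^{−1/λ}/μ₂} dF_V(v)`. -/
def chiLam (N : ℝ → ℝ → ℝ) (μ : Measure ℝ) (l : ℝ) : ℝ :=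
  l ^ (-1 / l) *
    ∫ v, min (tau N v ^ (-1 / l) / mu1 N μ l)
             (tau N (1 - v) ^ (-1 / l) / mu2 N μ l) ∂μ

/-!
For `c ≥ 1` one has `x^{1/λ} (1 + λxc)^{-1/λ} = (x⁻¹ + λc)^{-1/λ}`, which is at most `λ^{-1/λ}`
and tends to `(λc)^{-1/λ}`. As `τ ≥ 1`, dominated convergence gives `x^{1/λ} S_A(x) → μ₁`,
hence `q_A(s)^{1/λ} ~ μ₁ s`, and likewise for `B`. Since the GP tail is decreasing, `S` is the
integral of the minimum of the two marginal integrands. Multiplied by `t^{max(β,γ)}`, the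
integrand of a side whose exponent is the maximum tends to the probability density
`(λτ)^{-1/λ}/μᵢ`, that of the other side to `+∞`; dominated convergence gives `χ_λ` when
`β = γ` and `1` otherwise. A function with a positive limit is slowly varying.
-/

open Real Topology

lemma tendsto_min_of_tendsto_atTop {ι : Type*} {F : Filter ι} {f g : ι → ℝ} {a : ℝ}
    (hf : Tendsto f F atTop) (hg : Tendsto g F (𝓝 a)) :
    Tendsto (fun t => min (f t) (g t)) F (𝓝 a) := by
  refine hg.congr' ?_
  filter_upwards [hf.eventually_ge_atTop (a + 1), hg.eventually_le_const (lt_add_one a)]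
    with t hft hgt
  exact (min_eq_right (hgt.trans hft)).symm

section GPTail

variable {l : ℝ}

lemma gpTail_of_nonneg (hl : 0 < l) {x : ℝ} (hx : 0 ≤ x) :
    gpTail l x = (1 + l * x) ^ (-1 / l) := by
  rw [gpTail, if_neg hl.ne', max_eq_left (by positivity)]

lemma gpTail_nonneg (x : ℝ) : 0 ≤ gpTail l x := by
  unfold gpTail
  split_ifs
  exacts [(exp_pos _).le, rpow_nonneg (le_max_right _ _) _]

lemma gpTail_pos (hl : 0 < l) {x : ℝ} (hx : 0 ≤ x) : 0 < gpTail l x := by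
  rw [gpTail_of_nonneg hl hx]
  positivity

lemma neg_one_div_nonpos (hl : 0 < l) : -1 / l ≤ 0 :=
  div_nonpos_of_nonpos_of_nonneg (by norm_num) hl.le

lemma gpTail_antitoneOn (hl : 0 < l) : AntitoneOn (gpTail l) (Ici 0) := by
  intro a (ha : 0 ≤ a) b (hb : 0 ≤ b) hab
  rw [gpTail_of_nonneg hl ha, gpTail_of_nonneg hl hb]
  exact rpow_le_rpow_of_nonpos (by positivity) (by gcongr) (neg_one_div_nonpos hl)

lemma gpTail_le_one (hl : 0 < l) {x : ℝ} (hx : 0 ≤ x) : gpTail l x ≤ 1 :=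
  (gpTail_antitoneOn hl self_mem_Ici hx hx).trans_eq (by simp [gpTail, hl.ne'])

lemma measurable_gpTail (l : ℝ) : Measurable (gpTail l) := by
  unfold gpTail
  by_cases hl : l = 0 <;> simp only [hl, ↓reduceIte] <;> fun_prop

lemma rpow_mul_gpTail_eq (hl : 0 < l) {x c : ℝ} (hx : 0 < x) (hc : 0 ≤ c) :
    x ^ (1 / l) * gpTail l (x * c) = (x⁻¹ + l * c) ^ (-1 / l) := by
  rw [gpTail_of_nonneg hl (by positivity),
    show x⁻¹ + l * c = x⁻¹ * (1 + l * (x * c)) by field_simp,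
    mul_rpow (by positivity) (by positivity), inv_rpow hx.le, ← rpow_neg hx.le, neg_div, neg_neg]

lemma mul_rpow_neg_one_div_le (hl : 0 < l) {c : ℝ} (hc : 1 ≤ c) :
    (l * c) ^ (-1 / l) ≤ l ^ (-1 / l) :=
  rpow_le_rpow_of_nonpos hl (by nlinarith) (neg_one_div_nonpos hl)

lemma rpow_mul_gpTail_le (hl : 0 < l) {x c : ℝ} (hx : 0 < x) (hc : 1 ≤ c) :
    x ^ (1 / l) * gpTail l (x * c) ≤ l ^ (-1 / l) := by
  rw [rpow_mul_gpTail_eq hl hx (by linarith)]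
  exact rpow_le_rpow_of_nonpos hl (by nlinarith [inv_pos.2 hx]) (neg_one_div_nonpos hl)

lemma tendsto_rpow_mul_gpTail (hl : 0 < l) {c : ℝ} (hc : 0 < c) :
    Tendsto (fun x => x ^ (1 / l) * gpTail l (x * c)) atTop (𝓝 ((l * c) ^ (-1 / l))) := by
  have h : Tendsto (fun x : ℝ => (x⁻¹ + l * c) ^ (-1 / l)) atTop (𝓝 ((0 + l * c) ^ (-1 / l))) :=
    (tendsto_inv_atTop_zero.add_const _).rpow_const (Or.inl (by positivity))
  rw [zero_add] at h
  refine h.congr' ?_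
  filter_upwards [eventually_gt_atTop 0] with x hx
  rw [rpow_mul_gpTail_eq hl hx hc.le]

lemma div_rpow_mul_rpow_mul_gpTail {x : ℝ} (hx : 0 < x) (T c : ℝ) :
    T / x ^ (1 / l) * (x ^ (1 / l) * gpTail l (x * c)) = T * gpTail l (x * c) := by
  have : x ^ (1 / l) ≠ 0 := (rpow_pos_of_pos hx _).ne'
  field_simp

variable {x T : ℝ → ℝ} {c : ℝ}

lemma tendsto_mul_gpTail_of_tendsto_div (hl : 0 < l) (hx : Tendsto x atTop atTop) {r : ℝ}
    (hr : Tendsto (fun t => T t / x t ^ (1 / l)) atTop (𝓝 r)) (hc : 0 < c) :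
    Tendsto (fun t => T t * gpTail l (x t * c)) atTop (𝓝 (r * (l * c) ^ (-1 / l))) := by
  refine (hr.mul ((tendsto_rpow_mul_gpTail hl hc).comp hx)).congr' ?_
  filter_upwards [hx.eventually_gt_atTop 0] with t ht
  exact div_rpow_mul_rpow_mul_gpTail ht _ _

lemma tendsto_mul_gpTail_atTop_of_tendsto_div (hl : 0 < l) (hx : Tendsto x atTop atTop)
    (hr : Tendsto (fun t => T t / x t ^ (1 / l)) atTop atTop) (hc : 0 < c) :
    Tendsto (fun t => T t * gpTail l (x t * c)) atTop atTop := by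
  refine (hr.atTop_mul_pos (by positivity) ((tendsto_rpow_mul_gpTail hl hc).comp hx)).congr' ?_
  filter_upwards [hx.eventually_gt_atTop 0] with t ht
  exact div_rpow_mul_rpow_mul_gpTail ht _ _

end GPTail

section WeightedTail

variable {α : Type*} [MeasurableSpace α] {μ : Measure α} {l : ℝ} {w w₁ w₂ : α → ℝ}

/-- `mu1 N μ l` and `mu2 N μ l` are this constant for the weights `τ(v)` and `τ(1 - v)`. -/
def tailConst (μ : Measure α) (l : ℝ) (w : α → ℝ) : ℝ :=
  l ^ (-1 / l) * ∫ v, w v ^ (-1 / l) ∂μ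

def tailDensity (μ : Measure α) (l : ℝ) (w : α → ℝ) (v : α) : ℝ :=
  (tailConst μ l w)⁻¹ * (l * w v) ^ (-1 / l)

def IsTailQuantile (μ : Measure α) (l : ℝ) (w : α → ℝ) (q : ℝ → ℝ) : Prop :=
  ∀ s, 1 ≤ s → 0 ≤ q s ∧ ∫ v, gpTail l (q s * w v) ∂μ = 1 / s

lemma integral_pos_of_ae_pos [NeZero μ] {f : α → ℝ} (hf : Integrable f μ)
    (hpos : ∀ᵐ v ∂μ, 0 < f v) : 0 < ∫ v, f v ∂μ := by
  have hfull : μ (Function.support f)ᶜ = 0 :=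
    measure_eq_zero_iff_ae_notMem.2 (hpos.mono fun v hv hv' => hv' hv.ne')
  rw [integral_pos_iff_support_of_nonneg_ae (hpos.mono fun _ hv => hv.le) hf,
    measure_congr (ae_eq_univ.2 hfull)]
  exact Measure.measure_univ_pos.2 (NeZero.ne μ)

lemma tailConst_eq_integral (hl : 0 < l) (hw : ∀ᵐ v ∂μ, 1 ≤ w v) :
    tailConst μ l w = ∫ v, (l * w v) ^ (-1 / l) ∂μ := by
  rw [tailConst, ← integral_const_mul]
  refine integral_congr_ae ?_
  filter_upwards [hw] with v hv
  rw [mul_rpow hl.le (by linarith)]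

lemma integrable_mul_rpow [IsFiniteMeasure μ] (hl : 0 < l) (hwm : Measurable w)
    (hw : ∀ᵐ v ∂μ, 1 ≤ w v) : Integrable (fun v => (l * w v) ^ (-1 / l)) μ := by
  refine Integrable.mono' (integrable_const (l ^ (-1 / l)))
    ((hwm.const_mul l).pow_const _).aestronglyMeasurable ?_
  filter_upwards [hw] with v hv
  rw [norm_of_nonneg (rpow_nonneg (by nlinarith) _)]
  exact mul_rpow_neg_one_div_le hl hv

lemma tailConst_pos [IsFiniteMeasure μ] [NeZero μ] (hl : 0 < l) (hwm : Measurable w)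
    (hw : ∀ᵐ v ∂μ, 1 ≤ w v) : 0 < tailConst μ l w := by
  rw [tailConst_eq_integral hl hw]
  exact integral_pos_of_ae_pos (integrable_mul_rpow hl hwm hw)
    (hw.mono fun v hv => rpow_pos_of_pos (by nlinarith) _)

lemma tailDensity_pos [IsFiniteMeasure μ] [NeZero μ] (hl : 0 < l) (hwm : Measurable w)
    (hw : ∀ᵐ v ∂μ, 1 ≤ w v) : ∀ᵐ v ∂μ, 0 < tailDensity μ l w v :=
  hw.mono fun v hv =>
    mul_pos (inv_pos.2 (tailConst_pos hl hwm hw)) (rpow_pos_of_pos (by nlinarith) _)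

lemma integrable_tailDensity [IsFiniteMeasure μ] (hl : 0 < l) (hwm : Measurable w)
    (hw : ∀ᵐ v ∂μ, 1 ≤ w v) : Integrable (tailDensity μ l w) μ :=
  (integrable_mul_rpow hl hwm hw).const_mul _

lemma integral_tailDensity [IsFiniteMeasure μ] [NeZero μ] (hl : 0 < l) (hwm : Measurable w)
    (hw : ∀ᵐ v ∂μ, 1 ≤ w v) : ∫ v, tailDensity μ l w v ∂μ = 1 := by
  unfold tailDensity
  rw [integral_const_mul, ← tailConst_eq_integral hl hw,
    inv_mul_cancel₀ (tailConst_pos hl hwm hw).ne']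

lemma integrable_gpTail_mul [IsFiniteMeasure μ] (hl : 0 < l) (hwm : Measurable w)
    (hw : ∀ᵐ v ∂μ, 1 ≤ w v) {x : ℝ} (hx : 0 ≤ x) :
    Integrable (fun v => gpTail l (x * w v)) μ := by
  refine Integrable.mono' (integrable_const 1)
    ((measurable_gpTail l).comp (hwm.const_mul x)).aestronglyMeasurable ?_
  filter_upwards [hw] with v hv
  rw [norm_of_nonneg (gpTail_nonneg _)]
  exact gpTail_le_one hl (by nlinarith)

lemma tendsto_rpow_mul_integral_gpTail [IsFiniteMeasure μ] (hl : 0 < l) (hwm : Measurable w)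
    (hw : ∀ᵐ v ∂μ, 1 ≤ w v) :
    Tendsto (fun x => x ^ (1 / l) * ∫ v, gpTail l (x * w v) ∂μ) atTop
      (𝓝 (tailConst μ l w)) := by
  have hdct : Tendsto (fun x => ∫ v, x ^ (1 / l) * gpTail l (x * w v) ∂μ) atTop
      (𝓝 (∫ v, (l * w v) ^ (-1 / l) ∂μ)) := by
    refine tendsto_integral_filter_of_dominated_convergence (fun _ => l ^ (-1 / l))
      (Eventually.of_forall fun x => ?_) ?_ (integrable_const _) ?_
    · exact (((measurable_gpTail l).comp (hwm.const_mul x)).const_mul _).aestronglyMeasurable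
    · filter_upwards [eventually_gt_atTop 0] with x hx
      filter_upwards [hw] with v hv
      rw [norm_of_nonneg (mul_nonneg (rpow_nonneg hx.le _) (gpTail_nonneg _))]
      exact rpow_mul_gpTail_le hl hx hv
    · filter_upwards [hw] with v hv
      exact tendsto_rpow_mul_gpTail hl (by linarith)
  simpa only [integral_const_mul, ← tailConst_eq_integral hl hw] using hdct

namespace IsTailQuantile

variable {q : ℝ → ℝ}

lemma tendsto_atTop [IsFiniteMeasure μ] [NeZero μ] (hl : 0 < l) (hwm : Measurable w)
    (hw : ∀ᵐ v ∂μ, 1 ≤ w v) (hq : IsTailQuantile μ l w q) : Tendsto q atTop atTop := by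
  refine Filter.tendsto_atTop.2 fun M => ?_
  set ε := ∫ v, gpTail l (max M 0 * w v) ∂μ
  have hε : 0 < ε := integral_pos_of_ae_pos (integrable_gpTail_mul hl hwm hw (le_max_right _ _))
    (hw.mono fun v hv => gpTail_pos hl (by nlinarith [le_max_right M 0]))
  filter_upwards [eventually_ge_atTop 1, eventually_gt_atTop ε⁻¹] with s hs hsε
  obtain ⟨hq0, hqs⟩ := hq s hs
  by_contra! hlt
  have hle : ε ≤ 1 / s := hqs ▸ integral_mono_ae (integrable_gpTail_mul hl hwm hw
    (le_max_right _ _)) (integrable_gpTail_mul hl hwm hw hq0) (by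
      filter_upwards [hw] with v hv
      exact gpTail_antitoneOn hl (mem_Ici.2 (by positivity))
        (mem_Ici.2 (by nlinarith [le_max_right M 0]))
        (by gcongr; exact hlt.le.trans (le_max_left _ _)))
  linarith [one_div s ▸ inv_lt_of_inv_lt₀ hε hsε]

lemma tendsto_div_rpow [IsFiniteMeasure μ] [NeZero μ] (hl : 0 < l) (hwm : Measurable w)
    (hw : ∀ᵐ v ∂μ, 1 ≤ w v) (hq : IsTailQuantile μ l w q) :
    Tendsto (fun s => s / q s ^ (1 / l)) atTop (𝓝 (tailConst μ l w)⁻¹) := by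
  refine (((tendsto_rpow_mul_integral_gpTail hl hwm hw).comp
    (hq.tendsto_atTop hl hwm hw)).inv₀ (tailConst_pos hl hwm hw).ne').congr' ?_
  filter_upwards [eventually_ge_atTop 1] with s hs
  simp only [Function.comp_apply, (hq s hs).2, mul_one_div, inv_div]

end IsTailQuantile

lemma tendsto_mul_integral_gpTail_max [IsFiniteMeasure μ] (hl : 0 < l) (hwm₁ : Measurable w₁)
    (hwm₂ : Measurable w₂) (hw₁ : ∀ᵐ v ∂μ, 1 ≤ w₁ v) (hw₂ : ∀ᵐ v ∂μ, 1 ≤ w₂ v)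
    {x y T : ℝ → ℝ} {r : ℝ} {φ : α → ℝ} (hx : ∀ᶠ t in atTop, 0 ≤ x t)
    (hy : Tendsto y atTop atTop) (hT : ∀ᶠ t in atTop, 0 ≤ T t)
    (hr : Tendsto (fun t => T t / y t ^ (1 / l)) atTop (𝓝 r))
    (hφ : ∀ᵐ v ∂μ, Tendsto (fun t => min (T t * gpTail l (x t * w₁ v))
      (T t * gpTail l (y t * w₂ v))) atTop (𝓝 (φ v))) :
    Tendsto (fun t => T t * ∫ v, gpTail l (max (x t * w₁ v) (y t * w₂ v)) ∂μ) atTop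
      (𝓝 (∫ v, φ v ∂μ)) := by
  have hdct : Tendsto (fun t => ∫ v, min (T t * gpTail l (x t * w₁ v))
      (T t * gpTail l (y t * w₂ v)) ∂μ) atTop (𝓝 (∫ v, φ v ∂μ)) := by
    refine tendsto_integral_filter_of_dominated_convergence (fun _ => (r + 1) * l ^ (-1 / l))
      (Eventually.of_forall fun t => ?_) ?_ (integrable_const _) hφ
    · exact ((((measurable_gpTail l).comp (hwm₁.const_mul _)).const_mul _).min
        (((measurable_gpTail l).comp (hwm₂.const_mul _)).const_mul _)).aestronglyMeasurable
    · filter_upwards [hT, hy.eventually_gt_atTop 0, hr.eventually_le_const (lt_add_one r)]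
        with t hTt hyt hrt
      have hratio : 0 ≤ T t / y t ^ (1 / l) := div_nonneg hTt (rpow_nonneg hyt.le _)
      filter_upwards [hw₂] with v hv
      rw [norm_of_nonneg (le_min (mul_nonneg hTt (gpTail_nonneg _))
        (mul_nonneg hTt (gpTail_nonneg _)))]
      calc _ ≤ T t * gpTail l (y t * w₂ v) := min_le_right _ _
        _ = T t / y t ^ (1 / l) * (y t ^ (1 / l) * gpTail l (y t * w₂ v)) :=
          (div_rpow_mul_rpow_mul_gpTail hyt _ _).symm
        _ ≤ (r + 1) * l ^ (-1 / l) :=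
          mul_le_mul hrt (rpow_mul_gpTail_le hl hyt hv)
            (mul_nonneg (rpow_nonneg hyt.le _) (gpTail_nonneg _)) (hratio.trans hrt)
  refine hdct.congr' ?_
  filter_upwards [hx, hy.eventually_ge_atTop 0, hT] with t hxt hyt hTt
  rw [← integral_const_mul]
  refine integral_congr_ae ?_
  filter_upwards [hw₁, hw₂] with v hv₁ hv₂
  rw [(gpTail_antitoneOn hl).map_max (mem_Ici.2 (by nlinarith)) (mem_Ici.2 (by nlinarith)),
    mul_min_of_nonneg _ _ hTt]

variable {q₁ q₂ : ℝ → ℝ} {β γ : ℝ}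

lemma tendsto_rpow_mul_integral_gpTail_max_of_eq [IsFiniteMeasure μ] [NeZero μ] (hl : 0 < l)
    (hwm₁ : Measurable w₁) (hwm₂ : Measurable w₂) (hw₁ : ∀ᵐ v ∂μ, 1 ≤ w₁ v)
    (hw₂ : ∀ᵐ v ∂μ, 1 ≤ w₂ v) (hq₁ : IsTailQuantile μ l w₁ q₁)
    (hq₂ : IsTailQuantile μ l w₂ q₂) (hβ : 0 < β) :
    Tendsto (fun t => t ^ β * ∫ v, gpTail l (max (q₁ (t ^ β) * w₁ v) (q₂ (t ^ β) * w₂ v)) ∂μ)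
      atTop (𝓝 (∫ v, min (tailDensity μ l w₁ v) (tailDensity μ l w₂ v) ∂μ)) := by
  have hs : Tendsto (fun t : ℝ => t ^ β) atTop atTop := tendsto_rpow_atTop hβ
  have hr₁ : Tendsto (fun t => t ^ β / q₁ (t ^ β) ^ (1 / l)) atTop
      (𝓝 (tailConst μ l w₁)⁻¹) := (hq₁.tendsto_div_rpow hl hwm₁ hw₁).comp hs
  have hr₂ : Tendsto (fun t => t ^ β / q₂ (t ^ β) ^ (1 / l)) atTop
      (𝓝 (tailConst μ l w₂)⁻¹) := (hq₂.tendsto_div_rpow hl hwm₂ hw₂).comp hs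
  have hx₁ := (hq₁.tendsto_atTop hl hwm₁ hw₁).comp hs
  have hx₂ := (hq₂.tendsto_atTop hl hwm₂ hw₂).comp hs
  refine tendsto_mul_integral_gpTail_max hl hwm₁ hwm₂ hw₁ hw₂ (hx₁.eventually_ge_atTop 0) hx₂
    (hs.eventually_ge_atTop 0) hr₂ ?_
  filter_upwards [hw₁, hw₂] with v hv₁ hv₂
  exact (tendsto_mul_gpTail_of_tendsto_div hl hx₁ hr₁ (by linarith)).min
    (tendsto_mul_gpTail_of_tendsto_div hl hx₂ hr₂ (by linarith))

lemma tendsto_rpow_mul_integral_gpTail_max_of_lt [IsFiniteMeasure μ] [NeZero μ] (hl : 0 < l)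
    (hwm₁ : Measurable w₁) (hwm₂ : Measurable w₂) (hw₁ : ∀ᵐ v ∂μ, 1 ≤ w₁ v)
    (hw₂ : ∀ᵐ v ∂μ, 1 ≤ w₂ v) (hq₁ : IsTailQuantile μ l w₁ q₁)
    (hq₂ : IsTailQuantile μ l w₂ q₂) (hβ : 0 < β) (hβγ : β < γ) :
    Tendsto (fun t => t ^ γ * ∫ v, gpTail l (max (q₁ (t ^ β) * w₁ v) (q₂ (t ^ γ) * w₂ v)) ∂μ)
      atTop (𝓝 1) := by
  have hsβ : Tendsto (fun t : ℝ => t ^ β) atTop atTop := tendsto_rpow_atTop hβ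
  have hsγ : Tendsto (fun t : ℝ => t ^ γ) atTop atTop := tendsto_rpow_atTop (hβ.trans hβγ)
  have hr₁ : Tendsto (fun t => t ^ γ / q₁ (t ^ β) ^ (1 / l)) atTop atTop := by
    refine ((tendsto_rpow_atTop (sub_pos.2 hβγ)).atTop_mul_pos
      (inv_pos.2 (tailConst_pos hl hwm₁ hw₁))
      ((hq₁.tendsto_div_rpow hl hwm₁ hw₁).comp hsβ)).congr' ?_
    filter_upwards [eventually_gt_atTop 0] with t ht
    rw [Function.comp_apply, ← mul_div_assoc, ← rpow_add ht, sub_add_cancel]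
  have hr₂ : Tendsto (fun t => t ^ γ / q₂ (t ^ γ) ^ (1 / l)) atTop
      (𝓝 (tailConst μ l w₂)⁻¹) := (hq₂.tendsto_div_rpow hl hwm₂ hw₂).comp hsγ
  have hx₁ := (hq₁.tendsto_atTop hl hwm₁ hw₁).comp hsβ
  have hx₂ := (hq₂.tendsto_atTop hl hwm₂ hw₂).comp hsγ
  rw [← integral_tailDensity hl hwm₂ hw₂]
  refine tendsto_mul_integral_gpTail_max hl hwm₁ hwm₂ hw₁ hw₂ (hx₁.eventually_ge_atTop 0) hx₂
    (hsγ.eventually_ge_atTop 0) hr₂ ?_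
  filter_upwards [hw₁, hw₂] with v hv₁ hv₂
  exact tendsto_min_of_tendsto_atTop (tendsto_mul_gpTail_atTop_of_tendsto_div hl hx₁ hr₁
    (by linarith)) (tendsto_mul_gpTail_of_tendsto_div hl hx₂ hr₂ (by linarith))

end WeightedTail

namespace IsNorm2

variable {N : ℝ → ℝ → ℝ}

lemma le_abs_mul_add_abs_mul (hN : IsNorm2 N) (x y : ℝ) :
    N x y ≤ |x| * N 1 0 + |y| * N 0 1 := by
  have htri := hN.2.2.2 x 0 0 y
  have hx := hN.2.2.1 x 1 0
  have hy := hN.2.2.1 y 0 1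
  simp only [mul_one, mul_zero, add_zero, zero_add] at htri hx hy
  rwa [hx, hy] at htri

lemma continuous_uncurry (hN : IsNorm2 N) : Continuous fun p : ℝ × ℝ => N p.1 p.2 := by
  refine (LipschitzWith.of_le_add_mul' (N 1 0 + N 0 1) fun p q => ?_).continuous
  have htri := hN.2.2.2 q.1 q.2 (p.1 - q.1) (p.2 - q.2)
  have hle := hN.le_abs_mul_add_abs_mul (p.1 - q.1) (p.2 - q.2)
  have h₁ : |p.1 - q.1| ≤ dist p q := by
    rw [Prod.dist_eq, ← Real.dist_eq]; exact le_max_left _ _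
  have h₂ : |p.2 - q.2| ≤ dist p q := by
    rw [Prod.dist_eq, ← Real.dist_eq]; exact le_max_right _ _
  simp only [add_sub_cancel] at htri
  nlinarith [hN.1 1 0, hN.1 0 1]

lemma measurable_tau (hN : IsNorm2 N) : Measurable (tau N) :=
  (hN.continuous_uncurry.comp (continuous_id.prodMk (continuous_const.sub continuous_id))
    ).measurable.div measurable_id

end IsNorm2

lemma one_le_tau {N : ℝ → ℝ → ℝ} (hC2 : CondC2 N) {v : ℝ} (h0 : 0 < v) :
    1 ≤ tau N v := by
  rw [tau, le_div_iff₀ h0, one_mul]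
  exact (le_abs_self v).trans ((le_max_left _ _).trans (hC2 v (1 - v)))

lemma GoodMeasure.ae_mem_Ioo {μ : Measure ℝ} (hμ : GoodMeasure μ) :
    ∀ᵐ v ∂μ, v ∈ Ioo (0 : ℝ) 1 := by
  filter_upwards [mem_ae_iff.2 hμ.1, measure_eq_zero_iff_ae_notMem.1 (hμ.2.1 0),
    measure_eq_zero_iff_ae_notMem.1 (hμ.2.1 1)] with v hv hv₀ hv₁
  exact ⟨lt_of_le_of_ne hv.1 (Ne.symm hv₀), lt_of_le_of_ne hv.2 hv₁⟩

lemma chiLam_eq_integral_min_tailDensity {N : ℝ → ℝ → ℝ} {μ : Measure ℝ} {l : ℝ} (hl : 0 < l)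
    (hτ₁ : ∀ᵐ v ∂μ, 1 ≤ tau N v) (hτ₂ : ∀ᵐ v ∂μ, 1 ≤ tau N (1 - v)) :
    chiLam N μ l = ∫ v, min (tailDensity μ l (tau N) v)
      (tailDensity μ l (fun v => tau N (1 - v)) v) ∂μ := by
  rw [chiLam, ← integral_const_mul]
  refine integral_congr_ae ?_
  filter_upwards [hτ₁, hτ₂] with v hv₁ hv₂
  rw [mul_min_of_nonneg _ _ (rpow_nonneg hl.le _), tailDensity, tailDensity,
    mul_rpow hl.le (by linarith), mul_rpow hl.le (by linarith)]
  congr 1 <;> simp only [mu1, mu2, tailConst] <;> ring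

lemma slowlyVarying_of_tendsto {θ : ℝ → ℝ} {L : ℝ} (hL : 0 < L) (h : Tendsto θ atTop (𝓝 L)) :
    SlowlyVarying θ := by
  refine ⟨h.eventually_const_lt hL, fun a ha => ?_⟩
  have hratio := (h.comp (tendsto_id.const_mul_atTop ha)).div h hL.ne'
  rwa [div_self hL.ne'] at hratio

theorem stmt1_general (N : ℝ → ℝ → ℝ) (hN : IsNorm2 N) (hC2 : CondC2 N)
    (μ : Measure ℝ) [IsProbabilityMeasure μ] (hμ : GoodMeasure μ)
    (l β γ : ℝ) (hl : 0 < l) (hβ : 0 < β) (hγ : 0 < γ) (qA qB : ℝ → ℝ)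
    (hqA : ∀ t : ℝ, 1 ≤ t → 0 ≤ qA t ∧ survA N μ l (qA t) = 1 / t)
    (hqB : ∀ t : ℝ, 1 ≤ t → 0 ≤ qB t ∧ survB N μ l (qB t) = 1 / t) :
    ∃ θ : ℝ → ℝ, SlowlyVarying θ ∧
      (∀ t : ℝ, 1 ≤ t →
        survJ N μ l (qA (t ^ β)) (qB (t ^ γ)) = t ^ (-(max β γ)) * θ t) ∧
      (β = γ → Tendsto θ atTop (nhds (chiLam N μ l))) ∧
      (β ≠ γ → Tendsto θ atTop (nhds 1)) := by
  have hτ₁ : ∀ᵐ v ∂μ, 1 ≤ tau N v :=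
    hμ.ae_mem_Ioo.mono fun v hv => one_le_tau hC2 hv.1
  have hτ₂ : ∀ᵐ v ∂μ, 1 ≤ tau N (1 - v) :=
    hμ.ae_mem_Ioo.mono fun v hv => one_le_tau hC2 (by linarith [hv.2])
  have hm₁ : Measurable (tau N) := hN.measurable_tau
  have hm₂ : Measurable fun v => tau N (1 - v) := hm₁.comp (measurable_const.sub measurable_id)
  have hχ := chiLam_eq_integral_min_tailDensity hl hτ₁ hτ₂
  set L := if β = γ then chiLam N μ l else 1 with hL
  have hLpos : 0 < L := by
    rw [hL]
    split_ifs
    · rw [hχ]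
      exact integral_pos_of_ae_pos ((integrable_tailDensity hl hm₁ hτ₁).inf
        (integrable_tailDensity hl hm₂ hτ₂)) (by
          filter_upwards [tailDensity_pos hl hm₁ hτ₁, tailDensity_pos hl hm₂ hτ₂] with v h₁ h₂
          exact lt_min h₁ h₂)
    · exact one_pos
  have hlim : Tendsto (fun t => t ^ max β γ * survJ N μ l (qA (t ^ β)) (qB (t ^ γ)))
      atTop (𝓝 L) := by
    rcases lt_trichotomy β γ with h | rfl | h
    · rw [max_eq_right h.le, hL, if_neg h.ne]
      exact tendsto_rpow_mul_integral_gpTail_max_of_lt hl hm₁ hm₂ hτ₁ hτ₂ hqA hqB hβ h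
    · rw [max_self, hL, if_pos rfl, hχ]
      exact tendsto_rpow_mul_integral_gpTail_max_of_eq hl hm₁ hm₂ hτ₁ hτ₂ hqA hqB hβ
    · rw [max_eq_left h.le, hL, if_neg h.ne']
      refine (tendsto_rpow_mul_integral_gpTail_max_of_lt hl hm₂ hm₁ hτ₂ hτ₁ hqB hqA hγ h
        ).congr fun t => ?_
      simp only [survJ, max_comm]
  refine ⟨_, slowlyVarying_of_tendsto hLpos hlim, fun t ht => ?_, fun h => ?_, fun h => ?_⟩
  · rw [← mul_assoc, ← rpow_add (by linarith), neg_add_cancel, rpow_zero, one_mul]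
  · simpa only [hL, if_pos h] using hlim
  · simpa only [hL, if_neg h] using hlim

/-- Proposition 1: for `λ > 0` and `β, γ > 0`,
`S(q_A(t^β), q_B(t^γ)) = t^{−max(β,γ)} θ(t)` for `t ≥ 1`, with `θ` slowly
varying; `θ(t) → χ_λ` if `β = γ` and `θ(t) → 1` otherwise. -/
theorem stmt1 (N : ℝ → ℝ → ℝ) (hN : IsNorm2 N) (hC1 : CondC1 N) (hC2 : CondC2 N)
    (hC3 : CondC3 N) (μ : Measure ℝ) [IsProbabilityMeasure μ] (hμ : GoodMeasure μ)
    (l β γ : ℝ) (hl : 0 < l) (hβ : 0 < β) (hγ : 0 < γ) (qA qB : ℝ → ℝ)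
    (hqA : ∀ t : ℝ, 1 ≤ t → 0 ≤ qA t ∧ survA N μ l (qA t) = 1 / t)
    (hqB : ∀ t : ℝ, 1 ≤ t → 0 ≤ qB t ∧ survB N μ l (qB t) = 1 / t) :
    ∃ θ : ℝ → ℝ, SlowlyVarying θ ∧
      (∀ t : ℝ, 1 ≤ t →
        survJ N μ l (qA (t ^ β)) (qB (t ^ γ)) = t ^ (-(max β γ)) * θ t) ∧
      (β = γ → Tendsto θ atTop (nhds (chiLam N μ l))) ∧
      (β ≠ γ → Tendsto θ atTop (nhds 1)) :=
  stmt1_general N hN hC2 μ hμ l β γ hl hβ hγ qA qB hqA hqB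
end
end

section
/- Let λ = 0 and β, γ > 0, set ω = β/(β+γ), and suppose v′ ≠ v″ (equivalently m₊, m₋ > 0) and 1−v′ ≤ ω ≤ v′. Then t^{‖(β,γ)‖_m} S(q_A(t^β), q_B(t^γ)) → 0 as t → ∞. -/
open MeasureTheory Filter Set

noncomputable section

/-- `Ω₀ = {v ∈ [0,1] : τ(v) = 1}`. -/
def Omega0 (N : ℝ → ℝ → ℝ) : Set ℝ := {v | v ∈ Set.Icc (0:ℝ) 1 ∧ tau N v = 1}

/-- `v′ = inf Ω₀`. -/
def vlo (N : ℝ → ℝ → ℝ) : ℝ := sInf (Omega0 N)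

/-- `v″ = sup Ω₀`. -/
def vhi (N : ℝ → ℝ → ℝ) : ℝ := sSup (Omega0 N)

/-- The distribution function `F_V(x) = μ(−∞, x]`. -/
def Fdist (μ : Measure ℝ) (x : ℝ) : ℝ := (μ (Set.Iic x)).toReal

/-- `m₊ = F_V(v″) − F_V(v′)`. -/
def mPlus (N : ℝ → ℝ → ℝ) (μ : Measure ℝ) : ℝ := Fdist μ (vhi N) - Fdist μ (vlo N)

/-- `m₋ = F_V(1−v′) − F_V(1−v″)`. -/
def mMinus (N : ℝ → ℝ → ℝ) (μ : Measure ℝ) : ℝ :=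
  Fdist μ (1 - vlo N) - Fdist μ (1 - vhi N)

/-!
The function `v ↦ ‖(v, 1 − v)‖ − v` is convex and nonnegative, and `Ω₀` is its zero set in
`[0, 1]`. Hence `τ = 1` on `[v′, v″]`, and `τ(v) − 1 = (‖(v, 1 − v)‖ − v) / v` is strictly
decreasing on `(0, v′]`. The first fact gives `S_A(x) ≥ m₊ e^{−x}` and `S_B(y) ≥ m₋ e^{−y}`, so
`q_A(t^β) ≥ β (log t + ℓ)` and `q_B(t^γ) ≥ γ (log t + ℓ)` for a constant `ℓ`. With
`ω = β / (β + γ)` one has `‖(β, γ)‖ = β τ(ω) = γ τ(1 − ω)`, so by the second fact and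
`1 − v′ ≤ ω ≤ v′` the exponent `g(v) = max (β τ(v), γ τ(1 − v))` exceeds `‖(β, γ)‖` for `v ≠ ω`.
Therefore the integrand of `t^{‖(β,γ)‖} S(q_A(t^β), q_B(t^γ))` is at most
`e^{−‖(β,γ)‖ ℓ} (e^ℓ t)^{‖(β,γ)‖ − g(v)}`, which is bounded and tends to `0` for a.e. `v`.
-/

open Real Topology

namespace IsNorm2

variable {N : ℝ → ℝ → ℝ}

lemma smul_of_nonneg (hN : IsNorm2 N) {c : ℝ} (hc : 0 ≤ c) (x y : ℝ) :
    N (c * x) (c * y) = c * N x y := by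
  rw [hN.2.2.1, abs_of_nonneg hc]

lemma convexOn_diag (hN : IsNorm2 N) : ConvexOn ℝ univ fun v => N v (1 - v) := by
  refine ⟨convex_univ, fun a _ b _ θ η hθ hη hθη => ?_⟩
  calc N (θ • a + η • b) (1 - (θ • a + η • b))
      = N (θ * a + η * b) (θ * (1 - a) + η * (1 - b)) := by
        simp only [smul_eq_mul]; congr 1; linear_combination -hθη
    _ ≤ N (θ * a) (θ * (1 - a)) + N (η * b) (η * (1 - b)) := hN.2.2.2 _ _ _ _
    _ = θ • N a (1 - a) + η • N b (1 - b) := by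
        rw [hN.smul_of_nonneg hθ, hN.smul_of_nonneg hη, smul_eq_mul, smul_eq_mul]

lemma continuous_diag (hN : IsNorm2 N) : Continuous fun v => N v (1 - v) :=
  continuousOn_univ.mp (hN.convexOn_diag.continuousOn isOpen_univ)

lemma tau_nonneg (hN : IsNorm2 N) {v : ℝ} (hv : 0 ≤ v) : 0 ≤ tau N v :=
  div_nonneg (hN.1 _ _) hv

lemma diag_sub_le_max (hN : IsNorm2 N) {a b v : ℝ} (hab : a ≤ b) (hv : v ∈ Icc a b) :
    N v (1 - v) - v ≤ max (N a (1 - a) - a) (N b (1 - b) - b) :=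
  (hN.convexOn_diag.sub (concaveOn_id convex_univ)).le_on_segment trivial trivial
    (by rwa [segment_eq_Icc hab])

end IsNorm2

section Omega0

variable {N : ℝ → ℝ → ℝ}

lemma le_diag (hC2 : CondC2 N) (v : ℝ) : v ≤ N v (1 - v) :=
  (le_abs_self v).trans ((le_max_left _ _).trans (hC2 v (1 - v)))

lemma tau_eq_one_iff (hC2 : CondC2 N) {v : ℝ} (hv : 0 ≤ v) : tau N v = 1 ↔ N v (1 - v) = v := by
  rcases hv.eq_or_lt with rfl | hv
  · have h := (le_abs_self (1 - 0 : ℝ)).trans ((le_max_right _ _).trans (hC2 0 (1 - 0)))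
    simp only [tau, div_zero, zero_ne_one, false_iff]
    linarith
  · exact div_eq_one_iff_eq hv.ne'

lemma omega0_eq (hC2 : CondC2 N) : Omega0 N = Icc 0 1 ∩ {v | N v (1 - v) = v} := by
  ext v
  exact and_congr_right fun hv => tau_eq_one_iff hC2 hv.1

lemma isClosed_omega0 (hN : IsNorm2 N) (hC2 : CondC2 N) : IsClosed (Omega0 N) := by
  rw [omega0_eq hC2]
  exact isClosed_Icc.inter (isClosed_eq hN.continuous_diag continuous_id)

lemma bddBelow_omega0 : BddBelow (Omega0 N) := ⟨0, fun _ hv => hv.1.1⟩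

lemma bddAbove_omega0 : BddAbove (Omega0 N) := ⟨1, fun _ hv => hv.1.2⟩

lemma omega0_nonempty (hne : vlo N ≠ vhi N) : (Omega0 N).Nonempty := by
  by_contra h
  rw [not_nonempty_iff_eq_empty] at h
  simp [vlo, vhi, h] at hne

lemma vlo_mem_omega0 (hN : IsNorm2 N) (hC2 : CondC2 N) (hne : vlo N ≠ vhi N) :
    vlo N ∈ Omega0 N :=
  (isClosed_omega0 hN hC2).csInf_mem (omega0_nonempty hne) bddBelow_omega0

lemma vhi_mem_omega0 (hN : IsNorm2 N) (hC2 : CondC2 N) (hne : vlo N ≠ vhi N) :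
    vhi N ∈ Omega0 N :=
  (isClosed_omega0 hN hC2).csSup_mem (omega0_nonempty hne) bddAbove_omega0

lemma vlo_lt_vhi (hne : vlo N ≠ vhi N) : vlo N < vhi N :=
  (csInf_le_csSup (omega0_nonempty hne) bddBelow_omega0 bddAbove_omega0).lt_of_ne hne

lemma tau_eq_one_of_mem_Icc (hN : IsNorm2 N) (hC2 : CondC2 N) (hne : vlo N ≠ vhi N) {v : ℝ}
    (hv : v ∈ Icc (vlo N) (vhi N)) : tau N v = 1 := by
  have hlo := vlo_mem_omega0 hN hC2 hne
  have hhi := vhi_mem_omega0 hN hC2 hne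
  have hle := hN.diag_sub_le_max (vlo_lt_vhi hne).le hv
  rw [(tau_eq_one_iff hC2 hlo.1.1).1 hlo.2, (tau_eq_one_iff hC2 hhi.1.1).1 hhi.2, sub_self,
    sub_self, max_self] at hle
  exact (tau_eq_one_iff hC2 (hlo.1.1.trans hv.1)).2 (by linarith [le_diag hC2 v])

lemma tau_lt_tau_of_lt_of_le_vlo (hN : IsNorm2 N) (hC2 : CondC2 N) (hne : vlo N ≠ vhi N)
    {v w : ℝ} (hv : 0 < v) (hvw : v < w) (hw : w ≤ vlo N) : tau N w < tau N v := by
  have hlo := vlo_mem_omega0 hN hC2 hne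
  have hgap : 0 < N v (1 - v) - v := by
    have hnot : v ∉ Omega0 N := notMem_of_lt_csInf (hvw.trans_le hw) bddBelow_omega0
    have hv1 : v ≤ 1 := by linarith [hlo.1.2]
    have hne' : N v (1 - v) ≠ v := fun h =>
      hnot ⟨⟨hv.le, hv1⟩, (tau_eq_one_iff hC2 hv.le).2 h⟩
    exact sub_pos.2 ((le_diag hC2 v).lt_of_ne hne'.symm)
  have hmono : N w (1 - w) - w ≤ N v (1 - v) - v := by
    have h := hN.diag_sub_le_max (hvw.le.trans hw) ⟨hvw.le, hw⟩
    rwa [(tau_eq_one_iff hC2 hlo.1.1).1 hlo.2, sub_self, max_eq_left hgap.le] at h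
  have hw0 : 0 < w := hv.trans hvw
  calc tau N w = 1 + (N w (1 - w) - w) / w := by rw [tau]; field_simp; ring
    _ ≤ 1 + (N v (1 - v) - v) / w := by gcongr
    _ < 1 + (N v (1 - v) - v) / v := by gcongr
    _ = tau N v := by rw [tau]; field_simp; ring

end Omega0

section Exponent

variable {N : ℝ → ℝ → ℝ} {β γ : ℝ}

lemma mul_tau_div_add (hN : IsNorm2 N) (hβ : 0 < β) (hγ : 0 < γ) :
    β * tau N (β / (β + γ)) = N β γ := by
  have hs : 0 < β + γ := add_pos hβ hγ
  have h1 : 1 - β / (β + γ) = γ / (β + γ) := by field_simp; ring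
  have hscale : N β γ = (β + γ) * N (β / (β + γ)) (γ / (β + γ)) := by
    rw [← hN.smul_of_nonneg hs.le, mul_div_cancel₀ _ hs.ne', mul_div_cancel₀ _ hs.ne']
  rw [tau, h1, hscale]
  field_simp

lemma lt_max_mul_tau (hN : IsNorm2 N) (hC1 : CondC1 N) (hC2 : CondC2 N)
    (hne : vlo N ≠ vhi N) (hβ : 0 < β) (hγ : 0 < γ)
    (hω₁ : 1 - vlo N ≤ β / (β + γ)) (hω₂ : β / (β + γ) ≤ vlo N)
    {v : ℝ} (hv : v ∈ Ioo 0 1) (hvω : v ≠ β / (β + γ)) :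
    N β γ < max (β * tau N v) (γ * tau N (1 - v)) := by
  rcases hvω.lt_or_gt with h | h
  · refine lt_max_of_lt_left ?_
    rw [← mul_tau_div_add hN hβ hγ]
    exact mul_lt_mul_of_pos_left (tau_lt_tau_of_lt_of_le_vlo hN hC2 hne hv.1 h hω₂) hβ
  · refine lt_max_of_lt_right ?_
    have hω : γ / (γ + β) = 1 - β / (β + γ) := by
      field_simp [(add_pos hβ hγ).ne', (add_pos hγ hβ).ne']; ring
    rw [hC1, ← mul_tau_div_add hN hγ hβ, hω]
    refine mul_lt_mul_of_pos_left (tau_lt_tau_of_lt_of_le_vlo hN hC2 hne ?_ ?_ ?_) hγ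
    all_goals linarith [hv.2]

end Exponent

namespace GoodMeasure

variable {μ : Measure ℝ}

lemma ae_ne (hμ : GoodMeasure μ) (a : ℝ) : ∀ᵐ v ∂μ, v ≠ a :=
  measure_eq_zero_iff_ae_notMem.1 (hμ.2.1 a)

lemma ae_mem_Ioo_s6 (hμ : GoodMeasure μ) : ∀ᵐ v ∂μ, v ∈ Ioo 0 1 := by
  filter_upwards [measure_eq_zero_iff_ae_notMem.1 hμ.1, hμ.ae_ne 0, hμ.ae_ne 1] with v hv h0 h1
  rw [notMem_compl_iff] at hv
  exact ⟨hv.1.lt_of_ne h0.symm, hv.2.lt_of_ne h1⟩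

lemma measureReal_Ioo_pos [IsFiniteMeasure μ] (hμ : GoodMeasure μ) {a b : ℝ} (ha : 0 ≤ a)
    (hab : a < b) (hb : b ≤ 1) : 0 < μ.real (Ioo a b) :=
  ENNReal.toReal_pos (hμ.2.2 a b ha hab hb).ne' (measure_ne_top μ _)

end GoodMeasure

section Survival

variable {N : ℝ → ℝ → ℝ} {μ : Measure ℝ}

lemma gpTail_zero (x : ℝ) : gpTail 0 x = exp (-x) := if_pos rfl

lemma measureReal_mul_exp_neg_le_integral [IsFiniteMeasure μ] {f : ℝ → ℝ} (hf : Measurable f)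
    (hf0 : ∀ᵐ v ∂μ, 0 ≤ f v) {s : Set ℝ} (hs : MeasurableSet s) (hfs : ∀ v ∈ s, f v = 1)
    {x : ℝ} (hx : 0 ≤ x) : μ.real s * exp (-x) ≤ ∫ v, exp (-(x * f v)) ∂μ := by
  have hint : Integrable (fun v => exp (-(x * f v))) μ := by
    refine (integrable_const 1).mono' (hf.const_mul x).neg.exp.aestronglyMeasurable ?_
    filter_upwards [hf0] with v hv
    rw [norm_of_nonneg (exp_pos _).le, exp_le_one_iff]
    nlinarith
  calc μ.real s * exp (-x) = ∫ v in s, exp (-(x * f v)) ∂μ := by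
        rw [setIntegral_congr_fun hs (fun v hv => by rw [hfs v hv, mul_one]), setIntegral_const,
          smul_eq_mul]
    _ ≤ ∫ v, exp (-(x * f v)) ∂μ :=
        setIntegral_le_integral hint (Eventually.of_forall fun _ => (exp_pos _).le)

lemma measureReal_mul_exp_neg_le_survA [IsFiniteMeasure μ] (hN : IsNorm2 N) (hC2 : CondC2 N)
    (hne : vlo N ≠ vhi N) (hμ : GoodMeasure μ) {x : ℝ} (hx : 0 ≤ x) :
    μ.real (Ioo (vlo N) (vhi N)) * exp (-x) ≤ survA N μ 0 x := by
  simp only [survA, gpTail_zero]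
  refine measureReal_mul_exp_neg_le_integral hN.measurable_tau ?_ measurableSet_Ioo
    (fun v hv => tau_eq_one_of_mem_Icc hN hC2 hne (Ioo_subset_Icc_self hv)) hx
  filter_upwards [hμ.ae_mem_Ioo_s6] with v hv
  exact hN.tau_nonneg hv.1.le

lemma measureReal_mul_exp_neg_le_survB [IsFiniteMeasure μ] (hN : IsNorm2 N) (hC2 : CondC2 N)
    (hne : vlo N ≠ vhi N) (hμ : GoodMeasure μ) {y : ℝ} (hy : 0 ≤ y) :
    μ.real (Ioo (1 - vhi N) (1 - vlo N)) * exp (-y) ≤ survB N μ 0 y := by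
  simp only [survB, gpTail_zero]
  have := hN.measurable_tau
  refine measureReal_mul_exp_neg_le_integral (by fun_prop) ?_ measurableSet_Ioo
    (fun v hv => tau_eq_one_of_mem_Icc hN hC2 hne ⟨by linarith [hv.2], by linarith [hv.1]⟩) hy
  filter_upwards [hμ.ae_mem_Ioo_s6] with v hv
  exact hN.tau_nonneg (by linarith [hv.2])

lemma mul_log_add_le_of_mul_exp_neg_le {c ℓ β t q : ℝ} (hc : 0 < c) (hβ : 0 < β)
    (hℓ : ℓ ≤ log c / β) (ht : 0 < t) (h : c * exp (-q) ≤ 1 / t ^ β) :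
    β * (log t + ℓ) ≤ q := by
  have htβ : 0 < t ^ β := rpow_pos_of_pos ht β
  have hexp : c * t ^ β ≤ exp q := by
    rw [exp_neg, ← div_eq_mul_inv, div_le_div_iff₀ (exp_pos q) htβ, one_mul] at h
    exact h
  have hlog := log_le_log (by positivity) hexp
  rw [log_exp, log_mul hc.ne' htβ.ne', log_rpow ht] at hlog
  rw [le_div_iff₀ hβ] at hℓ
  linarith

end Survival

lemma exp_mul_exp_neg_max_le {G β γ ℓ s a b τ₁ τ₂ : ℝ} (hL : 0 ≤ s + ℓ)
    (ha : β * (s + ℓ) ≤ a) (hb : γ * (s + ℓ) ≤ b) (hτ₁ : 0 ≤ τ₁) (hτ₂ : 0 ≤ τ₂) :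
    exp (G * s) * exp (-max (a * τ₁) (b * τ₂)) ≤
      exp (-(G * ℓ) - (s + ℓ) * (max (β * τ₁) (γ * τ₂) - G)) := by
  have hmax : (s + ℓ) * max (β * τ₁) (γ * τ₂) ≤ max (a * τ₁) (b * τ₂) := by
    rw [mul_max_of_nonneg _ _ hL]
    exact max_le_max (by nlinarith) (by nlinarith)
  rw [← exp_add, exp_le_exp]
  linarith

lemma tendsto_exp_sub_log_add_mul {d : ℝ} (hd : 0 < d) (a ℓ : ℝ) :
    Tendsto (fun t => exp (a - (log t + ℓ) * d)) atTop (𝓝 0) := by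
  have h : Tendsto (fun t => (log t + ℓ) * d) atTop atTop :=
    (tendsto_atTop_add_const_right _ ℓ tendsto_log_atTop).atTop_mul_const hd
  refine tendsto_exp_atBot.comp ?_
  simpa only [sub_eq_add_neg, Function.comp_def] using
    tendsto_atBot_add_const_left _ a (tendsto_neg_atTop_atBot.comp h)

lemma tendsto_rpow_mul_survJ_of_quantile_ge {N : ℝ → ℝ → ℝ} (hN : IsNorm2 N) (hC1 : CondC1 N)
    (hC2 : CondC2 N) (hne : vlo N ≠ vhi N) {μ : Measure ℝ} [IsFiniteMeasure μ]
    (hμ : GoodMeasure μ) {β γ : ℝ} (hβ : 0 < β) (hγ : 0 < γ)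
    (hω₁ : 1 - vlo N ≤ β / (β + γ)) (hω₂ : β / (β + γ) ≤ vlo N) {qA qB : ℝ → ℝ} {ℓ : ℝ}
    (hqA : ∀ᶠ t in atTop, β * (log t + ℓ) ≤ qA (t ^ β))
    (hqB : ∀ᶠ t in atTop, γ * (log t + ℓ) ≤ qB (t ^ γ)) :
    Tendsto (fun t : ℝ => t ^ (N β γ) * survJ N μ 0 (qA (t ^ β)) (qB (t ^ γ)))
      atTop (𝓝 0) := by
  set G := N β γ
  set g : ℝ → ℝ := fun v => max (β * tau N v) (γ * tau N (1 - v))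
  set F : ℝ → ℝ → ℝ := fun t v =>
    exp (G * log t) * exp (-max (qA (t ^ β) * tau N v) (qB (t ^ γ) * tau N (1 - v)))
  have hG : ∀ᵐ v ∂μ, v ∈ Ioo 0 1 ∧ G < g v := by
    filter_upwards [hμ.ae_mem_Ioo_s6, hμ.ae_ne (β / (β + γ))] with v hv hvω
    exact ⟨hv, lt_max_mul_tau hN hC1 hC2 hne hβ hγ hω₁ hω₂ hv hvω⟩
  have hF : ∀ᶠ t in atTop, 0 ≤ log t + ℓ ∧
      ∀ v ∈ Ioo (0 : ℝ) 1, F t v ≤ exp (-(G * ℓ) - (log t + ℓ) * (g v - G)) := by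
    filter_upwards [(tendsto_atTop_add_const_right _ ℓ tendsto_log_atTop).eventually_ge_atTop 0,
      hqA, hqB] with t hL hA hB
    exact ⟨hL, fun v hv => exp_mul_exp_neg_max_le hL hA hB (hN.tau_nonneg hv.1.le)
      (hN.tau_nonneg (by linarith [hv.2]))⟩
  have hrepr : ∀ᶠ t in atTop, ∫ v, F t v ∂μ = t ^ G * survJ N μ 0 (qA (t ^ β)) (qB (t ^ γ)) := by
    filter_upwards [eventually_gt_atTop 0] with t ht
    simp only [F, survJ, gpTail_zero, integral_const_mul, rpow_def_of_pos ht, mul_comm (log t)]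
  have hmeas : ∀ t, AEStronglyMeasurable (F t) μ := fun t => by
    have := hN.measurable_tau
    exact (by fun_prop : Measurable (F t)).aestronglyMeasurable
  have hbound : ∀ᶠ t in atTop, ∀ᵐ v ∂μ, ‖F t v‖ ≤ exp (-(G * ℓ)) := by
    filter_upwards [hF] with t ⟨hL, hFt⟩
    filter_upwards [hG] with v ⟨hv, hGv⟩
    rw [norm_of_nonneg (by positivity)]
    exact (hFt v hv).trans (exp_le_exp.2 (by nlinarith))
  have hlim : ∀ᵐ v ∂μ, Tendsto (fun t => F t v) atTop (𝓝 0) := by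
    filter_upwards [hG] with v ⟨hv, hGv⟩
    exact squeeze_zero' (Eventually.of_forall fun t => by positivity)
      (hF.mono fun t ht => ht.2 v hv) (tendsto_exp_sub_log_add_mul (sub_pos.2 hGv) _ _)
  have h := tendsto_integral_filter_of_dominated_convergence _ (Eventually.of_forall hmeas)
    hbound (integrable_const _) hlim
  rw [integral_zero] at h
  exact h.congr' hrepr

theorem stmt6_general (N : ℝ → ℝ → ℝ) (hN : IsNorm2 N) (hC1 : CondC1 N) (hC2 : CondC2 N)
    (μ : Measure ℝ) [IsProbabilityMeasure μ] (hμ : GoodMeasure μ)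
    (β γ : ℝ) (hβ : 0 < β) (hγ : 0 < γ) (qA qB : ℝ → ℝ)
    (hqA : ∀ t : ℝ, 1 ≤ t → 0 ≤ qA t ∧ survA N μ 0 (qA t) = 1 / t)
    (hqB : ∀ t : ℝ, 1 ≤ t → 0 ≤ qB t ∧ survB N μ 0 (qB t) = 1 / t)
    (hne : vlo N ≠ vhi N)
    (hω₁ : 1 - vlo N ≤ β / (β + γ)) (hω₂ : β / (β + γ) ≤ vlo N) :
    Tendsto (fun t : ℝ => t ^ (N β γ) * survJ N μ 0 (qA (t ^ β)) (qB (t ^ γ)))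
      atTop (nhds 0) := by
  have hlo := vlo_mem_omega0 hN hC2 hne
  have hhi := vhi_mem_omega0 hN hC2 hne
  have hlohi := vlo_lt_vhi hne
  have hcA : 0 < μ.real (Ioo (vlo N) (vhi N)) :=
    hμ.measureReal_Ioo_pos hlo.1.1 hlohi hhi.1.2
  have hcB : 0 < μ.real (Ioo (1 - vhi N) (1 - vlo N)) :=
    hμ.measureReal_Ioo_pos (by linarith [hhi.1.2]) (by linarith) (by linarith [hlo.1.1])
  refine tendsto_rpow_mul_survJ_of_quantile_ge hN hC1 hC2 hne hμ hβ hγ hω₁ hω₂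
    (ℓ := min (log (μ.real (Ioo (vlo N) (vhi N))) / β)
      (log (μ.real (Ioo (1 - vhi N) (1 - vlo N))) / γ)) ?_ ?_ <;>
    filter_upwards [eventually_ge_atTop 1] with t ht
  · obtain ⟨hq0, hq⟩ := hqA (t ^ β) (one_le_rpow ht hβ.le)
    exact mul_log_add_le_of_mul_exp_neg_le hcA hβ (min_le_left _ _) (by linarith)
      (hq ▸ measureReal_mul_exp_neg_le_survA hN hC2 hne hμ hq0)
  · obtain ⟨hq0, hq⟩ := hqB (t ^ γ) (one_le_rpow ht hγ.le)
    exact mul_log_add_le_of_mul_exp_neg_le hcB hγ (min_le_right _ _) (by linarith)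
      (hq ▸ measureReal_mul_exp_neg_le_survB hN hC2 hne hμ hq0)

/-- Proposition 5: for `λ = 0`, `β, γ > 0`, `ω = β/(β+γ)`,
if `v′ ≠ v″` and `1−v′ ≤ ω ≤ v′`, then
`t^{‖(β,γ)‖_m} S(q_A(t^β), q_B(t^γ)) → 0` as `t → ∞`. -/
theorem stmt6 (N : ℝ → ℝ → ℝ) (hN : IsNorm2 N) (hC1 : CondC1 N) (hC2 : CondC2 N)
    (hC3 : CondC3 N) (μ : Measure ℝ) [IsProbabilityMeasure μ] (hμ : GoodMeasure μ)
    (β γ : ℝ) (hβ : 0 < β) (hγ : 0 < γ) (qA qB : ℝ → ℝ)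
    (hqA : ∀ t : ℝ, 1 ≤ t → 0 ≤ qA t ∧ survA N μ 0 (qA t) = 1 / t)
    (hqB : ∀ t : ℝ, 1 ≤ t → 0 ≤ qB t ∧ survB N μ 0 (qB t) = 1 / t)
    (hne : vlo N ≠ vhi N)
    (hω₁ : 1 - vlo N ≤ β / (β + γ)) (hω₂ : β / (β + γ) ≤ vlo N) :
    Tendsto (fun t : ℝ => t ^ (N β γ) * survJ N μ 0 (qA (t ^ β)) (qB (t ^ γ)))
      atTop (nhds 0) :=
  stmt6_general N hN hC1 hC2 μ hμ β γ hβ hγ qA qB hqA hqB hne hω₁ hω₂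
end
end

section
/- Suppose β > 0 and φ is a slowly varying function at infinity such that s ↦ s^{−β}φ(s) defines a continuous strictly decreasing function from [s₀, ∞) onto (0, 1] for some s₀. Then there exists a slowly varying function u defined on [1, ∞) such that s^{−β}φ(s) = t^{−β} whenever s = t·u(t)^{1/β}. Furthermore, for any c in the extended range [0, +∞], u(t) → c as t → ∞ if and only if φ(s) → c as s → ∞. -/
open Filter Set

noncomputable section

/-!
Put `g s = s ^ (-β) * φ s` and `f = g ^ (-1/β)`, so that `f s = s * φ s ^ (-1/β)` is an increasing
bijection of `[s₀, ∞)` onto `[1, ∞)` with `f (r s) / f s → r`, since `φ` varies slowly. Its inverse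
`σ` then satisfies `σ (a t) / σ t → a`: compare `f (r σ t) ≈ r t` with `f (σ (a t)) = a t` by
monotonicity. Hence `u t = (σ t / t) ^ β` is slowly varying. The equation `g (σ t) = t ^ (-β)` says
that `σ t = t * u t ^ (1/β)` and `u = φ ∘ σ`; as `σ` and `f` are mutually inverse and both tend
to `∞`, `u` and `φ` have the same limits.
-/

open Topology

namespace SlowlyVarying

theorem rpow {L : ℝ → ℝ} (hL : SlowlyVarying L) (p : ℝ) :
    SlowlyVarying fun t => L t ^ p := by
  refine ⟨hL.1.mono fun t ht => Real.rpow_pos_of_pos ht p, fun a ha => ?_⟩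
  have hlim := (hL.2 a ha).rpow_const (p := p) (Or.inl one_ne_zero)
  rw [Real.one_rpow] at hlim
  refine hlim.congr' ?_
  filter_upwards [hL.1, (tendsto_id.const_mul_atTop ha).eventually hL.1] with t ht hat
  exact Real.div_rpow hat.le ht.le p

theorem tendsto_div_of_eventuallyEq_id_mul {L f : ℝ → ℝ} (hL : SlowlyVarying L)
    (hf : f =ᶠ[atTop] fun s => s * L s) {r : ℝ} (hr : 0 < r) :
    Tendsto (fun s => f (r * s) / f s) atTop (𝓝 r) := by
  have hlim := (hL.2 r hr).const_mul r
  rw [mul_one] at hlim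
  refine hlim.congr' ?_
  filter_upwards [hf, (tendsto_id.const_mul_atTop hr).eventually hf, eventually_gt_atTop 0]
    with s hs (hrs : f (r * s) = r * s * L (r * s)) hs_pos
  rw [hs, hrs, mul_div_mul_comm, mul_div_cancel_right₀ r hs_pos.ne']

end SlowlyVarying

theorem slowlyVarying_div_id {σ : ℝ → ℝ} (hpos : ∀ᶠ t in atTop, 0 < σ t)
    (hσ : ∀ a, 0 < a → Tendsto (fun t => σ (a * t) / σ t) atTop (𝓝 a)) :
    SlowlyVarying fun t => σ t / t := by
  refine ⟨(hpos.and (eventually_gt_atTop 0)).mono fun t ht => div_pos ht.1 ht.2,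
    fun a ha => ?_⟩
  have hlim := (hσ a ha).div_const a
  rw [div_self ha.ne'] at hlim
  refine hlim.congr' ?_
  filter_upwards [eventually_gt_atTop 0] with t ht
  field_simp

section MonotoneSurjOn

variable {f : ℝ → ℝ} {a b : ℝ}

theorem tendsto_atTop_of_monotoneOn_of_surjOn (hf : MonotoneOn f (Ici a))
    (hsurj : SurjOn f (Ici a) (Ici b)) : Tendsto f atTop atTop := by
  refine tendsto_atTop.2 fun M => ?_
  obtain ⟨x, hx, hfx⟩ := hsurj (le_max_left b M : max b M ∈ Ici b)
  filter_upwards [eventually_ge_atTop x] with s hs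
  calc M ≤ f x := hfx ▸ le_max_right b M
    _ ≤ f s := hf hx (mem_Ici.2 (le_trans hx hs)) hs

theorem tendsto_invFunOn_atTop (hf : MonotoneOn f (Ici a)) (hsurj : SurjOn f (Ici a) (Ici b)) :
    Tendsto (Function.invFunOn f (Ici a)) atTop atTop := by
  refine tendsto_atTop.2 fun M => ?_
  filter_upwards [eventually_gt_atTop (max b (f (max a M)))] with t ht
  have ht' : t ∈ Ici b := (le_max_left _ _).trans ht.le
  refine (le_max_right a M).trans
    (hf.reflect_lt (le_max_left a M) (hsurj.mapsTo_invFunOn ht') ?_).le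
  rw [hsurj.rightInvOn_invFunOn ht']
  exact (le_max_right _ _).trans_lt ht

theorem tendsto_invFunOn_mul_div (hf : MonotoneOn f (Ici a)) (hsurj : SurjOn f (Ici a) (Ici b))
    (hratio : ∀ r, 0 < r → Tendsto (fun s => f (r * s) / f s) atTop (𝓝 r)) {c : ℝ} (hc : 0 < c) :
    Tendsto (fun t => Function.invFunOn f (Ici a) (c * t) / Function.invFunOn f (Ici a) t)
      atTop (𝓝 c) := by
  set σ := Function.invFunOn f (Ici a)
  have hσ : Tendsto σ atTop atTop := tendsto_invFunOn_atTop hf hsurj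
  have hct : Tendsto (fun t => c * t) atTop atTop := tendsto_id.const_mul_atTop hc
  have hfσ : ∀ᶠ t in atTop, f (σ t) = t :=
    (eventually_ge_atTop b).mono fun t ht => hsurj.rightInvOn_invFunOn ht
  have hfσ_lim : ∀ r, 0 < r → Tendsto (fun t => f (r * σ t) / t) atTop (𝓝 r) := fun r hr =>
    ((hratio r hr).comp hσ).congr' (hfσ.mono fun t ht => by simp only [Function.comp, ht])
  have hev : ∀ᶠ t in atTop, 0 < t ∧ 0 < σ t ∧ a ≤ σ (c * t) ∧ f (σ (c * t)) = c * t :=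
    (eventually_gt_atTop 0).and <| (hσ.eventually_gt_atTop 0).and <|
      ((hσ.comp hct).eventually_ge_atTop a).and (hct.eventually hfσ)
  have hmem : ∀ r, 0 < r → ∀ᶠ t in atTop, a ≤ r * σ t := fun r hr =>
    (hσ.eventually_ge_atTop (a / r)).mono fun t ht => (div_le_iff₀' hr).1 ht
  refine tendsto_order.2 ⟨fun r hr => ?_, fun r hr => ?_⟩
  · rcases le_or_gt r 0 with hr0 | hr0
    · filter_upwards [hev, (hσ.comp hct).eventually_gt_atTop 0] with t ⟨_, hσt, _⟩ hσct
      exact hr0.trans_lt (div_pos hσct hσt)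
    · filter_upwards [hev, hmem r hr0, (hfσ_lim r hr0).eventually_lt_const hr]
        with t ⟨ht, hσt, hσct, hfσct⟩ hrσt hlt
      rw [lt_div_iff₀ hσt]
      exact hf.reflect_lt hrσt hσct (by rwa [hfσct, ← div_lt_iff₀ ht])
  · have hr0 : 0 < r := hc.trans hr
    filter_upwards [hev, hmem r hr0, (hfσ_lim r hr0).eventually_const_lt hr]
      with t ⟨ht, hσt, hσct, hfσct⟩ hrσt hlt
    rw [div_lt_iff₀ hσt]
    exact hf.reflect_lt hσct hrσt (by rwa [hfσct, ← lt_div_iff₀ ht])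

end MonotoneSurjOn

theorem tendsto_iff_of_eventuallyEq_comp {α β γ : Type*} {la : Filter α} {lb : Filter β}
    {u : α → γ} {v : β → γ} {σ : α → β} {f : β → α}
    (hσ : Tendsto σ la lb) (hf : Tendsto f lb la) (hu : u =ᶠ[la] v ∘ σ) (hv : v =ᶠ[lb] u ∘ f)
    (l : Filter γ) : Tendsto u la l ↔ Tendsto v lb l :=
  ⟨fun h => (h.comp hf).congr' hv.symm, fun h => (h.comp hσ).congr' hu.symm⟩

theorem rpow_neg_mul_rpow_neg_inv {β s y : ℝ} (hβ : β ≠ 0) (hs : 0 ≤ s) (hy : 0 ≤ y) :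
    (s ^ (-β) * y) ^ (-β)⁻¹ = s * y ^ (-β)⁻¹ := by
  rw [Real.mul_rpow (by positivity) hy, Real.rpow_rpow_inv hs (neg_ne_zero.2 hβ)]

theorem rpow_neg_mul_eq_rpow_neg_iff {β s t y : ℝ} (hs : 0 < s) (ht : 0 < t) :
    s ^ (-β) * y = t ^ (-β) ↔ y = (s / t) ^ β := by
  rw [Real.rpow_neg hs.le, Real.rpow_neg ht.le, Real.div_rpow hs.le ht.le,
    inv_mul_eq_iff_eq_mul₀ (Real.rpow_pos_of_pos hs β).ne', div_eq_mul_inv]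

theorem SlowlyVarying.tendsto_rpow_neg_mul_rpow_neg_inv_div {L : ℝ → ℝ} (hL : SlowlyVarying L)
    {β r : ℝ} (hβ : β ≠ 0) (hr : 0 < r) :
    Tendsto (fun s => ((r * s) ^ (-β) * L (r * s)) ^ (-β)⁻¹ / (s ^ (-β) * L s) ^ (-β)⁻¹)
      atTop (𝓝 r) := by
  refine (hL.rpow (-β)⁻¹).tendsto_div_of_eventuallyEq_id_mul
    (f := fun s => (s ^ (-β) * L s) ^ (-β)⁻¹) ?_ hr
  filter_upwards [hL.1, eventually_ge_atTop 0] with s hLs hs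
  exact rpow_neg_mul_rpow_neg_inv hβ hs hLs.le

theorem pos_of_mapsTo_rpow_neg_mul_Ioi {β s₀ : ℝ} {φ : ℝ → ℝ} (hβ : β ≠ 0)
    (h : MapsTo (fun s => s ^ (-β) * φ s) (Ici s₀) (Ioi 0)) : 0 < s₀ := by
  by_contra! hs₀
  simpa [Real.zero_rpow (neg_ne_zero.2 hβ)] using h (mem_Ici.2 hs₀)

theorem strictMonoOn_rpow_neg_inv {g : ℝ → ℝ} {s₀ β : ℝ} (hβ : 0 < β)
    (hg : StrictAntiOn g (Ici s₀)) (hpos : MapsTo g (Ici s₀) (Ioi 0)) :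
    StrictMonoOn (fun s => g s ^ (-β)⁻¹) (Ici s₀) := fun _ hx _ hy hxy =>
  Real.rpow_lt_rpow_of_neg (hpos hy) (hg hx hy hxy) (inv_lt_zero.2 (neg_lt_zero.2 hβ))

theorem surjOn_rpow_neg_inv {g : ℝ → ℝ} {s₀ β : ℝ} (hβ : 0 < β) (hg : g '' Ici s₀ = Ioc 0 1) :
    SurjOn (fun s => g s ^ (-β)⁻¹) (Ici s₀) (Ici 1) := by
  intro t (ht : 1 ≤ t)
  have ht0 : 0 < t := one_pos.trans_le ht
  obtain ⟨s, hs, hgs⟩ : t ^ (-β) ∈ g '' Ici s₀ := hg ▸ ⟨Real.rpow_pos_of_pos ht0 _,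
    Real.rpow_le_one_of_one_le_of_nonpos ht (neg_nonpos.2 hβ.le)⟩
  refine ⟨s, hs, (Real.rpow_inv_eq ?_ ht0.le (neg_ne_zero.2 hβ.ne')).2 hgs⟩
  exact hgs ▸ (Real.rpow_pos_of_pos ht0 _).le

theorem stmt11_general (β : ℝ) (hβ : 0 < β) (s₀ : ℝ) (φ : ℝ → ℝ) (hφ : SlowlyVarying φ)
    (hanti : StrictAntiOn (fun s : ℝ => s ^ (-β) * φ s) (Set.Ici s₀))
    (honto : (fun s : ℝ => s ^ (-β) * φ s) '' Set.Ici s₀ = Set.Ioc (0:ℝ) 1) :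
    ∃ u : ℝ → ℝ,
      (∀ t : ℝ, 1 ≤ t → 0 < u t) ∧ SlowlyVarying u ∧
      (∀ t : ℝ, 1 ≤ t → ∀ s : ℝ, s = t * u t ^ (1 / β) →
        s ^ (-β) * φ s = t ^ (-β)) ∧
      (∀ c : ENNReal,
        Tendsto (fun t => ENNReal.ofReal (u t)) atTop (nhds c) ↔
          Tendsto (fun s => ENNReal.ofReal (φ s)) atTop (nhds c)) := by
  set g : ℝ → ℝ := fun s => s ^ (-β) * φ s
  set f : ℝ → ℝ := fun s => g s ^ (-β)⁻¹
  set σ : ℝ → ℝ := Function.invFunOn f (Ici s₀)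
  have hg_pos : MapsTo g (Ici s₀) (Ioi 0) :=
    (honto ▸ mapsTo_image g (Ici s₀)).mono_right Ioc_subset_Ioi_self
  have hf_mono : StrictMonoOn f (Ici s₀) := strictMonoOn_rpow_neg_inv hβ hanti hg_pos
  have hf_surj : SurjOn f (Ici s₀) (Ici 1) := surjOn_rpow_neg_inv hβ honto
  have hσ_mem : MapsTo σ (Ici 1) (Ici s₀) := hf_surj.mapsTo_invFunOn
  have hσ_pos : ∀ t, 1 ≤ t → 0 < σ t := fun t ht =>
    (pos_of_mapsTo_rpow_neg_mul_Ioi hβ.ne' hg_pos).trans_le (hσ_mem ht)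
  have hgσ : ∀ t, 1 ≤ t → g (σ t) = t ^ (-β) := fun t ht =>
    (Real.rpow_inv_eq (hg_pos (hσ_mem ht)).le (zero_le_one.trans ht) (neg_ne_zero.2 hβ.ne')).1
      (hf_surj.rightInvOn_invFunOn ht)
  have hφσ : ∀ t, 1 ≤ t → φ (σ t) = (σ t / t) ^ β := fun t ht =>
    (rpow_neg_mul_eq_rpow_neg_iff (hσ_pos t ht) (one_pos.trans_le ht)).1 (hgσ t ht)
  have hσ_top : Tendsto σ atTop atTop := tendsto_invFunOn_atTop hf_mono.monotoneOn hf_surj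
  have hf_top : Tendsto f atTop atTop :=
    tendsto_atTop_of_monotoneOn_of_surjOn hf_mono.monotoneOn hf_surj
  refine ⟨fun t => (σ t / t) ^ β, fun t ht => ?_, ?_,
    fun t ht s hs => ?_, fun c => tendsto_iff_of_eventuallyEq_comp hσ_top hf_top ?_ ?_ _⟩
  · exact Real.rpow_pos_of_pos (div_pos (hσ_pos t ht) (one_pos.trans_le ht)) β
  · refine (slowlyVarying_div_id (hσ_top.eventually_gt_atTop 0) fun a ha => ?_).rpow β
    exact tendsto_invFunOn_mul_div hf_mono.monotoneOn hf_surj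
      (fun r hr => hφ.tendsto_rpow_neg_mul_rpow_neg_inv_div hβ.ne' hr) ha
  · rw [hs, one_div, Real.rpow_rpow_inv (div_pos (hσ_pos t ht) (one_pos.trans_le ht)).le hβ.ne',
      mul_div_cancel₀ _ (one_pos.trans_le ht).ne']
    exact hgσ t ht
  · filter_upwards [eventually_ge_atTop 1] with t ht
    simp only [Function.comp, hφσ t ht]
  · filter_upwards [eventually_ge_atTop s₀, hf_top.eventually_ge_atTop 1] with s hs hfs
    have hσf : σ (f s) = s := hf_mono.injOn.leftInvOn_invFunOn hs
    rw [Function.comp_apply, ← hφσ _ hfs, hσf]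

/-- Lemma 1 of the paper: if `β > 0` and `φ` is slowly
varying with `s ↦ s^{−β} φ(s)` a continuous strictly decreasing map from
`[s₀, ∞)` onto `(0, 1]`, then there is a slowly varying `u` on `[1, ∞)` such
that `s^{−β} φ(s) = t^{−β}` whenever `s = t u(t)^{1/β}`; moreover, for any `c`
in the extended range `[0, +∞]`, `u(t) → c` iff `φ(s) → c`. -/
theorem stmt11 (β : ℝ) (hβ : 0 < β) (s₀ : ℝ) (φ : ℝ → ℝ) (hφ : SlowlyVarying φ)
    (hcont : ContinuousOn (fun s : ℝ => s ^ (-β) * φ s) (Set.Ici s₀))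
    (hanti : StrictAntiOn (fun s : ℝ => s ^ (-β) * φ s) (Set.Ici s₀))
    (honto : (fun s : ℝ => s ^ (-β) * φ s) '' Set.Ici s₀ = Set.Ioc (0:ℝ) 1) :
    ∃ u : ℝ → ℝ,
      (∀ t : ℝ, 1 ≤ t → 0 < u t) ∧ SlowlyVarying u ∧
      (∀ t : ℝ, 1 ≤ t → ∀ s : ℝ, s = t * u t ^ (1 / β) →
        s ^ (-β) * φ s = t ^ (-β)) ∧
      (∀ c : ENNReal,
        Tendsto (fun t => ENNReal.ofReal (u t)) atTop (nhds c) ↔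
          Tendsto (fun s => ENNReal.ofReal (φ s)) atTop (nhds c)) :=
  stmt11_general β hβ s₀ φ hφ hanti honto
end
end
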